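/- The bijection φ₀ between L × ℤ and the subgroup H is equivariant: for every integer j, every label a ∈ L, and every integer i, one has φ₀(a, i + j) = Γ₀((s₁₂·s₁₃)^{3j}, φ₀(a, i)), where on the left the group ℤ acts on L × ℤ by shifting the second coordinate, and on the right Γ₀ is the action of PJ₃ on H given by Γ₀(g, h) = g·h if g·h ∈ H and g·h·s₁₃ otherwise. -/

import Mathlib

/-- Generators of the cactus group `J₃`. -/
inductive CactusGen : Type
  | s12 | s23 | s13
  deriving DecidableEq

open FreeGroup in
/-- Relators of the cactus group `J₃`:
`s₁₂² = s₂₃² = s₁₃² = 1`, `s₁₂·s₁₃ = s₁₃·s₂₃`, `s₂₃·s₁₃ = s₁₃·s₁₂`. -/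
def cactusRels : Set (FreeGroup CactusGen) :=
  { of .s12 * of .s12,
    of .s23 * of .s23,
    of .s13 * of .s13,
    of .s12 * of .s13 * (of .s13 * of .s23)⁻¹,
    of .s23 * of .s13 * (of .s13 * of .s12)⁻¹ }

/-- The cactus group `J₃` as a presented group. -/
abbrev J3 : Type := PresentedGroup cactusRels

def s12 : J3 := PresentedGroup.of .s12
def s23 : J3 := PresentedGroup.of .s23
def s13 : J3 := PresentedGroup.of .s13

/-- The subgroup `H = J₃^{2}` of `J₃` generated by `s₁₂` and `s₂₃`. -/
def H : Subgroup J3 := Subgroup.closure {s12, s23}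

/-- The images of the generators in the symmetric group on three letters:
`s₁₂ ↦ (1 2)`, `s₂₃ ↦ (2 3)`, `s₁₃ ↦ (1 3)`. -/
def genPerm : CactusGen → Equiv.Perm (Fin 3)
  | .s12 => Equiv.swap 0 1
  | .s23 => Equiv.swap 1 2
  | .s13 => Equiv.swap 0 2

theorem cactusRels_hold : ∀ r ∈ cactusRels, FreeGroup.lift genPerm r = 1 := by
  intro r hr
  simp only [cactusRels, Set.mem_insert_iff, Set.mem_singleton_iff] at hr
  rcases hr with h | h | h | h | h <;> subst h <;>
    simp only [map_mul, map_inv, FreeGroup.lift_apply_of] <;> decide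

/-- The canonical projection `π : J₃ → S₃`; its kernel is the pure cactus group `PJ₃`. -/
def piJ3 : J3 →* Equiv.Perm (Fin 3) := PresentedGroup.toGroup cactusRels_hold

open Classical in
/-- The map `Γ₀ : (g, h) ↦ g·h` if `g·h ∈ H`, and `g·h·s₁₃` otherwise. -/
noncomputable def gamma (g h : J3) : J3 := if g * h ∈ H then g * h else g * h * s13

/-- The three labels `[213]`, `[123]`, `[132]`. -/
inductive L : Type
  | v213 | v123 | v132
  deriving DecidableEq

/-- The map `φ₀ : L × ℤ → J₃`. -/
def phi0 : L × ℤ → J3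
  | (.v213, k) =>
      if k % 2 = 0 then (s12 * s23) ^ ((3 * k) / 2) * s12 else (s12 * s23) ^ ((3 * k + 1) / 2)
  | (.v123, k) =>
      if k % 2 = 0 then (s12 * s23) ^ ((3 * k) / 2) else (s12 * s23) ^ ((3 * k - 1) / 2) * s12
  | (.v132, k) =>
      if k % 2 = 0 then (s12 * s23) ^ ((3 * k - 2) / 2) * s12 else (s12 * s23) ^ ((3 * k - 1) / 2)

/-!
With `u = s₁₂·s₁₃` one has `u² = s₁₂·s₂₃`, so `k ↦ u^k·s₁₃^k` runs through `H`: it is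
`(s₁₂·s₂₃)^n` at `k = 2n` and `(s₁₂·s₂₃)^n·s₁₂` at `k = 2n + 1`, and `φ₀(a, k)` is its term of
index `3k + c_a` with `c_a ∈ {1, 0, -1}`. Since `u^m·(u^k·s₁₃^k) = (u^{m+k}·s₁₃^{m+k})·s₁₃^m` and
`Γ₀` removes a trailing `s₁₃` (for `x ∈ H`, `x·s₁₃ ∉ H` because of the character sending
`s₁₂, s₂₃ ↦ 1` and `s₁₃ ↦ -1`), `Γ₀(u^m, -)` shifts the index by `m`; for `m = 3j` this is the
shift `i ↦ i + j`.
-/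

theorem s13_mul_self : s13 * s13 = 1 :=
  PresentedGroup.one_of_mem (rels := cactusRels) (x := .of .s13 * .of .s13) (by simp [cactusRels])

theorem s23_mul_s13 : s23 * s13 = s13 * s12 :=
  PresentedGroup.mk_eq_mk_of_mul_inv_mem (rels := cactusRels)
    (x := .of .s23 * .of .s13) (y := FreeGroup.of CactusGen.s13 * FreeGroup.of CactusGen.s12)
    (by simp [cactusRels])

theorem s13_mul_s12_mul_s13 : s13 * s12 * s13 = s23 := by
  rw [← s23_mul_s13, mul_assoc, s13_mul_self, mul_one]

theorem s13_zpow_of_even {n : ℤ} (hn : Even n) : s13 ^ n = 1 := by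
  obtain ⟨c, rfl⟩ := hn
  rw [← two_mul, zpow_mul, zpow_two, s13_mul_self, one_zpow]

theorem s13_zpow_of_odd {n : ℤ} (hn : Odd n) : s13 ^ n = s13 := by
  obtain ⟨c, rfl⟩ := hn
  rw [zpow_add_one, s13_zpow_of_even (even_two_mul c), one_mul]

theorem s12_mul_s13_sq : (s12 * s13) ^ 2 = s12 * s23 := by
  rw [sq, ← s13_mul_s12_mul_s13]
  group

theorem s12_mem_H : s12 ∈ H := Subgroup.subset_closure (by simp)

theorem s23_mem_H : s23 ∈ H := Subgroup.subset_closure (by simp)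

def genSign : CactusGen → ℤˣ
  | .s12 => 1
  | .s23 => 1
  | .s13 => -1

theorem genSign_rels : ∀ r ∈ cactusRels, FreeGroup.lift genSign r = 1 := by
  intro r hr
  simp only [cactusRels, Set.mem_insert_iff, Set.mem_singleton_iff] at hr
  rcases hr with rfl | rfl | rfl | rfl | rfl <;>
    simp only [map_mul, map_inv, FreeGroup.lift_apply_of] <;> decide

def sign13 : J3 →* ℤˣ := PresentedGroup.toGroup genSign_rels

theorem sign13_s13 : sign13 s13 = -1 := PresentedGroup.toGroup.of genSign_rels

theorem H_le_ker_sign13 : H ≤ sign13.ker := by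
  rw [H, Subgroup.closure_le]
  rintro x (rfl | rfl) <;> exact PresentedGroup.toGroup.of genSign_rels

theorem mul_s13_notMem_H {x : J3} (hx : x ∈ H) : x * s13 ∉ H := fun hxs => by
  have := H_le_ker_sign13 hxs
  rw [MonoidHom.mem_ker, map_mul, H_le_ker_sign13 hx, sign13_s13] at this
  exact absurd this (by decide)

theorem gamma_eq_of_mul_eq {g h x : J3} (hx : x ∈ H) {n : ℤ} (hgh : g * h = x * s13 ^ n) :
    gamma g h = x := by
  rcases Int.even_or_odd n with hn | hn
  · rw [s13_zpow_of_even hn, mul_one] at hgh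
    rw [gamma, if_pos (hgh ▸ hx), hgh]
  · rw [s13_zpow_of_odd hn] at hgh
    rw [gamma, if_neg (hgh ▸ mul_s13_notMem_H hx), hgh, mul_assoc, s13_mul_self, mul_one]

def enumH (k : ℤ) : J3 := (s12 * s13) ^ k * s13 ^ k

theorem enumH_of_eq_two_mul {k n : ℤ} (hk : k = 2 * n) : enumH k = (s12 * s23) ^ n := by
  rw [enumH, hk, s13_zpow_of_even (even_two_mul n), mul_one, zpow_mul, zpow_two,
    ← sq, s12_mul_s13_sq]

theorem enumH_of_eq_two_mul_add_one {k n : ℤ} (hk : k = 2 * n + 1) :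
    enumH k = (s12 * s23) ^ n * s12 := by
  rw [enumH, hk, s13_zpow_of_odd (odd_two_mul_add_one n), zpow_add_one, zpow_mul, zpow_two,
    ← sq, s12_mul_s13_sq, mul_assoc, mul_assoc, s13_mul_self, mul_one]

theorem enumH_mem (k : ℤ) : enumH k ∈ H := by
  obtain ⟨n, hk | hk⟩ := Int.even_or_odd' k
  · rw [enumH_of_eq_two_mul hk]
    exact H.zpow_mem (H.mul_mem s12_mem_H s23_mem_H) n
  · rw [enumH_of_eq_two_mul_add_one hk]
    exact H.mul_mem (H.zpow_mem (H.mul_mem s12_mem_H s23_mem_H) n) s12_mem_H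

theorem gamma_enumH (m k : ℤ) : gamma ((s12 * s13) ^ m) (enumH k) = enumH (m + k) := by
  refine gamma_eq_of_mul_eq (enumH_mem _) (n := -m) ?_
  rw [enumH, enumH, zpow_add, zpow_add]
  group

def L.offset : L → ℤ
  | .v213 => 1
  | .v123 => 0
  | .v132 => -1

theorem phi0_eq_enumH (a : L) (k : ℤ) : phi0 (a, k) = enumH (3 * k + a.offset) := by
  cases a <;> simp only [phi0, L.offset] <;> split_ifs <;>
    first
    | exact (enumH_of_eq_two_mul (by omega)).symm
    | exact (enumH_of_eq_two_mul_add_one (by omega)).symm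

/-- the bijection `φ₀` is equivariant: shifting the second coordinate by `j`
corresponds to acting by `(s₁₂·s₁₃)^{3j} ∈ PJ₃` via `Γ₀`. -/
theorem phi0_equivariant :
    ∀ (j : ℤ) (a : L) (i : ℤ),
      phi0 (a, i + j) = gamma ((s12 * s13) ^ (3 * j)) (phi0 (a, i)) := by
  intro j a i
  rw [phi0_eq_enumH, phi0_eq_enumH, gamma_enumH]
  congr 1
  ring
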